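/- Let P and φ be real symmetric n×n matrices with P positive definite (largest eigenvalue λ_max(P)) and φ positive definite (smallest eigenvalue λ_min(φ)). Let ε, γ be positive reals with ε ≤ γ, and let x : ℕ → ℝⁿ be a sequence satisfying x(i+1)ᵀ P x(i+1) − x(i)ᵀ P x(i) ≤ − x(i)ᵀ φ x(i) for all i, with x(0)ᵀ P x(0) ≤ γ². Then for every natural number N with N ≥ λ_max(P)(γ² − ε²)/(λ_min(φ) ε²), one has x(N)ᵀ P x(N) ≤ ε². -/

import Mathlib

/-!
Write `V i = x(i)ᵀ P x(i)`. The spectral bounds give `λ_min(φ) V i ≤ λ_max(P) x(i)ᵀ φ x(i)`, so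
while `V i > ε²` the Lyapunov decrease removes at least `d = λ_min(φ) ε² / λ_max(P)` per step.
Hence `V N ≤ max ε² (V 0 - N d)`, and the bound on `N` makes `V 0 - N d ≤ γ² - N d ≤ ε²`.
-/

open scoped Matrix

section Rayleigh

variable {ι : Type*} [Fintype ι] [DecidableEq ι] {A : Matrix ι ι ℝ}

open scoped MatrixOrder

theorem Matrix.PosDef.pos_of_mem_spectrum (hA : A.PosDef) {t : ℝ} (ht : t ∈ spectrum ℝ A) :
    0 < t :=
  hA.isStrictlyPositive.spectrum_pos ht

theorem Matrix.IsHermitian.dotProduct_mulVec_le_of_spectrum_le (hA : A.IsHermitian) {c : ℝ}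
    (h : ∀ t ∈ spectrum ℝ A, t ≤ c) (v : ι → ℝ) : v ⬝ᵥ A *ᵥ v ≤ c * (v ⬝ᵥ v) := by
  have hle : A ≤ algebraMap ℝ _ c := (le_algebraMap_iff_spectrum_le hA.isSelfAdjoint).mpr h
  have := Matrix.PosSemidef.dotProduct_mulVec_nonneg hle v
  simp only [star_trivial, Matrix.sub_mulVec, dotProduct_sub, Algebra.algebraMap_eq_smul_one,
    Matrix.smul_mulVec, Matrix.one_mulVec, dotProduct_smul, smul_eq_mul] at this
  linarith

theorem Matrix.IsHermitian.mul_dotProduct_le_of_le_spectrum (hA : A.IsHermitian) {c : ℝ}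
    (h : ∀ t ∈ spectrum ℝ A, c ≤ t) (v : ι → ℝ) : c * (v ⬝ᵥ v) ≤ v ⬝ᵥ A *ᵥ v := by
  have hle : algebraMap ℝ _ c ≤ A := (algebraMap_le_iff_le_spectrum hA.isSelfAdjoint).mpr h
  have := Matrix.PosSemidef.dotProduct_mulVec_nonneg hle v
  simp only [star_trivial, Matrix.sub_mulVec, dotProduct_sub, Algebra.algebraMap_eq_smul_one,
    Matrix.smul_mulVec, Matrix.one_mulVec, dotProduct_smul, smul_eq_mul] at this
  linarith

theorem Matrix.IsHermitian.mul_dotProduct_mulVec_le_mul_dotProduct_mulVec {B : Matrix ι ι ℝ}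
    (hA : A.IsHermitian) (hB : B.IsHermitian) {a b : ℝ} (ha : 0 ≤ a) (hb : 0 ≤ b)
    (hA_le : ∀ t ∈ spectrum ℝ A, t ≤ a) (hB_ge : ∀ t ∈ spectrum ℝ B, b ≤ t) (v : ι → ℝ) :
    b * (v ⬝ᵥ A *ᵥ v) ≤ a * (v ⬝ᵥ B *ᵥ v) :=
  calc b * (v ⬝ᵥ A *ᵥ v) ≤ b * (a * (v ⬝ᵥ v)) :=
        mul_le_mul_of_nonneg_left (hA.dotProduct_mulVec_le_of_spectrum_le hA_le v) hb
    _ = a * (b * (v ⬝ᵥ v)) := by ring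
    _ ≤ a * (v ⬝ᵥ B *ᵥ v) :=
        mul_le_mul_of_nonneg_left (hB.mul_dotProduct_le_of_le_spectrum hB_ge v) ha

end Rayleigh

theorem le_max_sub_nsmul_of_step_decrease {α : Type*} [AddCommGroup α] [LinearOrder α]
    [IsOrderedAddMonoid α] {V : ℕ → α} {c d : α} (hanti : ∀ i, V (i + 1) ≤ V i)
    (hstep : ∀ i, c < V i → V (i + 1) ≤ V i - d) (N : ℕ) : V N ≤ max c (V 0 - N • d) := by
  induction N with
  | zero => simp
  | succ N ih =>
    rcases le_or_gt (V N) c with hle | hlt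
    · exact le_max_of_le_left ((hanti N).trans hle)
    · have hV : V N ≤ V 0 - N • d := by simpa [hlt.not_ge] using ih
      refine le_max_of_le_right ((hstep N hlt).trans ?_)
      rw [succ_nsmul, ← sub_sub]
      exact sub_le_sub_right hV d

theorem stmt_11_general {n : ℕ} (P φ : Matrix (Fin n) (Fin n) ℝ)
    (hP : P.PosDef) (hφ : φ.PosDef)
    (lmaxP lminφ : ℝ)
    (hlmax : IsGreatest (spectrum ℝ P) lmaxP)
    (hlmin : IsLeast (spectrum ℝ φ) lminφ)
    (ε γ : ℝ) (hε : 0 < ε)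
    (x : ℕ → Fin n → ℝ)
    (hdec : ∀ i : ℕ,
      x (i + 1) ⬝ᵥ P *ᵥ x (i + 1) - x i ⬝ᵥ P *ᵥ x i ≤ -(x i ⬝ᵥ φ *ᵥ x i))
    (h0 : x 0 ⬝ᵥ P *ᵥ x 0 ≤ γ ^ 2)
    (N : ℕ) (hN : lmaxP * (γ ^ 2 - ε ^ 2) / (lminφ * ε ^ 2) ≤ (N : ℝ)) :
    x N ⬝ᵥ P *ᵥ x N ≤ ε ^ 2 := by
  have hlmax_pos : 0 < lmaxP := hP.pos_of_mem_spectrum hlmax.1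
  have hlmin_pos : 0 < lminφ := hφ.pos_of_mem_spectrum hlmin.1
  set V : ℕ → ℝ := fun i => x i ⬝ᵥ P *ᵥ x i
  set d : ℝ := lminφ * ε ^ 2 / lmaxP
  have hcomp (i : ℕ) : lminφ * V i ≤ lmaxP * (x i ⬝ᵥ φ *ᵥ x i) :=
    hP.isHermitian.mul_dotProduct_mulVec_le_mul_dotProduct_mulVec hφ.isHermitian
      hlmax_pos.le hlmin_pos.le (fun _ ht => hlmax.2 ht) (fun _ ht => hlmin.2 ht) (x i)
  have hanti (i : ℕ) : V (i + 1) ≤ V i := by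
    have := hφ.posSemidef.dotProduct_mulVec_nonneg (x i)
    simp only [star_trivial] at this
    linarith [hdec i]
  have hstep (i : ℕ) (hi : ε ^ 2 < V i) : V (i + 1) ≤ V i - d := by
    have : d ≤ x i ⬝ᵥ φ *ᵥ x i := by
      rw [div_le_iff₀' hlmax_pos]
      exact (mul_le_mul_of_nonneg_left hi.le hlmin_pos.le).trans (hcomp i)
    linarith [hdec i]
  have hNd : V 0 - N • d ≤ ε ^ 2 := by
    rw [div_le_iff₀ (by positivity)] at hN
    have : γ ^ 2 - ε ^ 2 ≤ N * d := by
      rw [mul_div_assoc', le_div_iff₀ hlmax_pos]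
      linarith
    rw [nsmul_eq_mul]
    linarith
  exact (le_max_sub_nsmul_of_step_decrease hanti hstep N).trans (max_le le_rfl hNd)

/-- Justification of the horizon lower bound in the APHUS rule (15): under the
Lyapunov decrease `‖x(i+1)‖_P² − ‖x(i)‖_P² ≤ −‖x(i)‖_φ²`, any trajectory starting
in `{x : xᵀPx ≤ γ²}` enters `{x : xᵀPx ≤ ε²}` within
`λ_max(P)(γ² − ε²)/(λ_min(φ)ε²)` steps. -/
theorem stmt_11 {n : ℕ} (P φ : Matrix (Fin n) (Fin n) ℝ)
    (hP : P.PosDef) (hφ : φ.PosDef)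
    (lmaxP lminφ : ℝ)
    (hlmax : IsGreatest (spectrum ℝ P) lmaxP)
    (hlmin : IsLeast (spectrum ℝ φ) lminφ)
    (ε γ : ℝ) (hε : 0 < ε) (hγ : 0 < γ) (hεγ : ε ≤ γ)
    (x : ℕ → Fin n → ℝ)
    (hdec : ∀ i : ℕ,
      x (i + 1) ⬝ᵥ P *ᵥ x (i + 1) - x i ⬝ᵥ P *ᵥ x i ≤ -(x i ⬝ᵥ φ *ᵥ x i))
    (h0 : x 0 ⬝ᵥ P *ᵥ x 0 ≤ γ ^ 2)
    (N : ℕ) (hN : lmaxP * (γ ^ 2 - ε ^ 2) / (lminφ * ε ^ 2) ≤ (N : ℝ)) :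
    x N ⬝ᵥ P *ᵥ x N ≤ ε ^ 2 :=
  stmt_11_general P φ hP hφ lmaxP lminφ hlmax hlmin ε γ hε x hdec h0 N hN
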